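/- The graph G = K_{s-2} ∨ complement(K_{t-1}) is the unique realization (up to isomorphism) of its degree sequence; moreover G contains no K_s, and the complement of G contains no subgraph isomorphic to any graph of order t without isolated vertices. -/

import Mathlib

open SimpleGraph
open scoped Classical

/-- Degree of a vertex. -/
noncomputable def deg {V : Type} (G : SimpleGraph V) (v : V) : ℕ := Nat.card (G.neighborSet v)

/-- Number of vertices of degree exactly 1 (leaves for trees/forests). -/
noncomputable def numLeaves {V : Type} (G : SimpleGraph V) : ℕ := Nat.card {v : V // deg G v = 1}

/-- Number of connected components containing at least one edge. -/
noncomputable def numEdgeComps {V : Type} (G : SimpleGraph V) : ℕ :=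
  Nat.card {c : G.ConnectedComponent // ∃ v w : V, G.Adj v w ∧ G.connectedComponentMk v = c}

/-- Maximum degree. -/
noncomputable def maxDeg {V : Type} (G : SimpleGraph V) : ℕ := sSup (Set.range (deg G))

/-- `G` and `H` pack: a bijection sends edges of `H` to non-edges of `G`. -/
def Packs {V W : Type} (G : SimpleGraph V) (H : SimpleGraph W) : Prop :=
  ∃ f : W ≃ V, ∀ x y : W, H.Adj x y → ¬ G.Adj (f x) (f y)

/-- `G` contains a copy of `H` as a subgraph. -/
def ContainsCopy {V W : Type} (G : SimpleGraph V) (H : SimpleGraph W) : Prop :=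
  ∃ f : W ↪ V, ∀ x y : W, H.Adj x y → G.Adj (f x) (f y)

/-- `G` realizes the degree sequence `π`. -/
def IsRealization {n : ℕ} (G : SimpleGraph (Fin n)) (π : Fin n → ℕ) : Prop :=
  ∀ i, deg G i = π i

/-- `π` is a graphic sequence. -/
def Graphic {n : ℕ} (π : Fin n → ℕ) : Prop :=
  ∃ G : SimpleGraph (Fin n), IsRealization G π

/-- `π` is potentially `H`-graphic. -/
def PotentiallyGraphic {n : ℕ} {W : Type} (π : Fin n → ℕ) (H : SimpleGraph W) : Prop :=
  ∃ G : SimpleGraph (Fin n), IsRealization G π ∧ ContainsCopy G H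

/-- The complementary sequence `π̄ = (n-1-d_n, …, n-1-d_1)`. -/
def compSeq {n : ℕ} (π : Fin n → ℕ) : Fin n → ℕ := fun i => n - 1 - π i.rev

/-- The potential-Ramsey number. -/
noncomputable def rpot {W₁ W₂ : Type} (H₁ : SimpleGraph W₁) (H₂ : SimpleGraph W₂) : ℕ :=
  sInf {N : ℕ | ∀ π : Fin N → ℕ, Antitone π → Graphic π →
    PotentiallyGraphic π H₁ ∨ PotentiallyGraphic (compSeq π) H₂}

/-- The star `K_{1,t-1}` on `t` vertices, centered at vertex `0`. -/
def starGraph (t : ℕ) : SimpleGraph (Fin t) := SimpleGraph.fromRel (fun i _ => (i : ℕ) = 0)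

/-- The join of K_{s-2} with an independent set of size t-1. -/
def cliquePlusIndep (s t : ℕ) : SimpleGraph (Fin (s - 2) ⊕ Fin (t - 1)) :=
  SimpleGraph.fromRel (fun a _ => a.isLeft)


/-!
In a realization of the degree sequence on `n` vertices, the vertices of degree `n - 1` are
universal and every other vertex has degree `s - 2`, the number of universal vertices; being
adjacent to all of them, it has no other neighbours. So every realization is the clique on its
universal vertices joined to an independent set, and the number of universal vertices, hence the
graph up to isomorphism, is read off the degree sequence. A clique of `G` meets the independent
part in at most one vertex, so it has at most `s - 1` vertices; in the complement of `G` the clique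
vertices are isolated, so a graph without isolated vertices can only embed into the `t - 1`
independent ones.
-/

namespace SimpleGraph

variable {V : Type*}

/-- The clique on `{x | p x}` joined to the independent set on its complement. -/
def completeSplitGraph (p : V → Prop) : SimpleGraph V := fromRel fun x _ => p x

@[simp]
lemma completeSplitGraph_adj {p : V → Prop} {x y : V} :
    (completeSplitGraph p).Adj x y ↔ x ≠ y ∧ (p x ∨ p y) := by
  simp [completeSplitGraph]

lemma isUniversal_completeSplitGraph {p : V → Prop} {x : V} (hx : p x) :
    (completeSplitGraph p).IsUniversal x :=
  fun _ hxy => completeSplitGraph_adj.2 ⟨hxy, .inl hx⟩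

lemma completeSplitGraph_nonempty_iso_of_card_eq [Finite V] {p q : V → Prop}
    (h : Nat.card {x // p x} = Nat.card {x // q x}) :
    Nonempty (completeSplitGraph p ≃g completeSplitGraph q) := by
  classical
  obtain ⟨e⟩ := Finite.card_eq.1 h
  have hσ : ∀ x, q (e.extendSubtype x) ↔ p x := fun x => by
    by_cases hx : p x
    · exact iff_of_true (e.extendSubtype_mem x hx) hx
    · exact iff_of_false (e.extendSubtype_not_mem x hx) hx
  exact ⟨⟨e.extendSubtype, by simp [hσ]⟩⟩

section Degree

variable [Fintype V] (G : SimpleGraph V) [DecidableRel G.Adj]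

lemma ncard_neighborSet (v : V) : (G.neighborSet v).ncard = G.degree v := by
  rw [← Nat.card_coe_set_eq, Nat.card_eq_fintype_card, card_neighborSet_eq_degree]

lemma ncard_universalVerts_eq_count :
    G.universalVerts.ncard =
      (Finset.univ.val.map fun v => G.degree v).count (Fintype.card V - 1) := by
  have : G.universalVerts = ↑(Finset.univ.filter fun v => Fintype.card V - 1 = G.degree v) := by
    ext v
    simp [universalVerts, eq_comm (a := Fintype.card V - 1)]
  rw [this, Set.ncard_coe_finset, Multiset.count_map, Finset.card_def, Finset.filter_val]

lemma eq_completeSplitGraph_universalVerts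
    (h : ∀ v, ¬ G.IsUniversal v → G.degree v ≤ G.universalVerts.ncard) :
    G = completeSplitGraph G.IsUniversal := by
  have hnbr : ∀ v, ¬ G.IsUniversal v → G.neighborSet v = G.universalVerts := fun v hv =>
    (Set.eq_of_subset_of_ncard_le (fun u hu => (hu fun huv => hv (by subst huv; exact hu)).symm)
      (by rw [ncard_neighborSet]; exact h v hv)).symm
  ext x y
  rw [completeSplitGraph_adj]
  refine ⟨fun hxy => ⟨hxy.ne, or_iff_not_imp_left.2 fun hx => ?_⟩, ?_⟩
  · exact (hnbr x hx ▸ hxy : y ∈ G.universalVerts)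
  · rintro ⟨hxy, hx | hy⟩
    · exact hx hxy
    · exact (hy hxy.symm).symm

lemma degree_le_ncard_universalVerts_completeSplitGraph (p : V → Prop)
    [DecidableRel (completeSplitGraph p).Adj] (v : V)
    (hv : ¬ (completeSplitGraph p).IsUniversal v) :
    (completeSplitGraph p).degree v ≤ (completeSplitGraph p).universalVerts.ncard := by
  rw [← ncard_neighborSet]
  refine Set.ncard_le_ncard (fun u hu => isUniversal_completeSplitGraph ?_) (Set.toFinite _)
  exact (completeSplitGraph_adj.1 hu).2.resolve_left (hv ∘ isUniversal_completeSplitGraph)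

end Degree

theorem nonempty_iso_of_map_degree_eq [Fintype V] (G H : SimpleGraph V) [DecidableRel G.Adj]
    [DecidableRel H.Adj] (hH : ∀ v, ¬ H.IsUniversal v → H.degree v ≤ H.universalVerts.ncard)
    (h : Finset.univ.val.map (fun v => G.degree v) = Finset.univ.val.map fun v => H.degree v) :
    Nonempty (G ≃g H) := by
  have hcard : G.universalVerts.ncard = H.universalVerts.ncard := by
    rw [ncard_universalVerts_eq_count, ncard_universalVerts_eq_count, h]
  have hG : ∀ v, ¬ G.IsUniversal v → G.degree v ≤ G.universalVerts.ncard := by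
    intro v hv
    obtain ⟨u, -, hu⟩ :=
      Multiset.mem_map.1 (h ▸ Multiset.mem_map_of_mem _ (Finset.mem_univ_val v))
    have hu' : ¬ H.IsUniversal u := by
      rwa [← degree_eq_card_sub_one, hu, degree_eq_card_sub_one]
    rw [← hu, hcard]
    exact hH u hu'
  rw [G.eq_completeSplitGraph_universalVerts hG, H.eq_completeSplitGraph_universalVerts hH]
  exact completeSplitGraph_nonempty_iso_of_card_eq hcard

end SimpleGraph

open SimpleGraph

variable {V W : Type}

lemma deg_eq_degree [Fintype V] (G : SimpleGraph V) [DecidableRel G.Adj] :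
    deg G = fun v => G.degree v :=
  funext fun v => Nat.card_eq_fintype_card.trans (G.card_neighborSet_eq_degree v)

lemma not_isIsolated_of_deg_pos {G : SimpleGraph V} {v : V} (h : 0 < deg G v) :
    ¬ G.IsIsolated v := by
  obtain ⟨⟨w, hw⟩⟩ := (Nat.card_pos_iff.1 h).1
  exact fun hv => hv w hw

lemma card_le_of_containsCopy_top_completeSplitGraph [Finite V] {p : V → Prop}
    (h : ContainsCopy (completeSplitGraph p) (⊤ : SimpleGraph W)) :
    Nat.card W ≤ Nat.card {x // p x} + 1 := by
  obtain ⟨f, hf⟩ := h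
  let g : W → Option {x // p x} := fun w => if hw : p (f w) then some ⟨f w, hw⟩ else none
  have hg : Function.Injective g := by
    intro a b hab
    by_contra hne
    have hab' := (completeSplitGraph_adj.1 (hf a b hne)).2
    simp only [g] at hab
    split_ifs at hab with ha hb hb
    · exact hne (f.injective (congrArg Subtype.val (Option.some_injective _ hab)))
    · exact hab'.elim ha hb
  simpa using Nat.card_le_card_of_injective g hg

lemma card_le_of_containsCopy_compl_completeSplitGraph [Finite V] {p : V → Prop}
    {H : SimpleGraph W} (hH : ∀ w, ¬ H.IsIsolated w)
    (h : ContainsCopy (completeSplitGraph p)ᶜ H) : Nat.card W ≤ Nat.card {x // ¬ p x} := by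
  obtain ⟨f, hf⟩ := h
  have hout : ∀ w, ¬ p (f w) := fun w hw => by
    obtain ⟨w', hww'⟩ := not_forall_not.1 (hH w)
    exact isIsolated_compl_iff_isUniversal.2 (isUniversal_completeSplitGraph hw) _ (hf w w' hww')
  exact Nat.card_le_card_of_injective (fun w => ⟨f w, hout w⟩)
    fun a b hab => f.injective (congrArg Subtype.val hab)

/-- K_{s-2} ∨ (t-1)·K_1 is the unique realization of its degree sequence, contains no K_s,
and its complement contains no t-vertex graph without isolated vertices. -/
theorem cliquePlusIndep_properties (s t : ℕ) (hs : 2 ≤ s) (ht : 2 ≤ t) :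
    (∀ G' : SimpleGraph (Fin (s - 2) ⊕ Fin (t - 1)),
        Multiset.map (deg G') Finset.univ.val
          = Multiset.map (deg (cliquePlusIndep s t)) Finset.univ.val →
        Nonempty (G' ≃g cliquePlusIndep s t)) ∧
    ¬ ContainsCopy (cliquePlusIndep s t) (⊤ : SimpleGraph (Fin s)) ∧
    (∀ (W : Type) [Fintype W] (H : SimpleGraph W), Fintype.card W = t →
        (∀ v : W, 0 < deg H v) → ¬ ContainsCopy (cliquePlusIndep s t)ᶜ H) := by
  refine ⟨fun G' hdeg => ?_, fun hK => ?_, fun W _ H hW hH hcopy => ?_⟩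
  · rw [deg_eq_degree, deg_eq_degree] at hdeg
    exact nonempty_iso_of_map_degree_eq G' (completeSplitGraph fun a => a.isLeft)
      (degree_le_ncard_universalVerts_completeSplitGraph _) hdeg
  · have := card_le_of_containsCopy_top_completeSplitGraph hK
    rw [Nat.card_congr Equiv.sumIsLeft] at this
    simp only [Nat.card_eq_fintype_card, Fintype.card_fin] at this
    omega
  · have := card_le_of_containsCopy_compl_completeSplitGraph
      (fun v => not_isIsolated_of_deg_pos (hH v)) hcopy
    rw [Nat.card_congr ((Equiv.subtypeEquivRight fun _ => Sum.not_isLeft).trans Equiv.sumIsRight),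
      Nat.card_eq_fintype_card, hW] at this
    simp only [Nat.card_eq_fintype_card, Fintype.card_fin] at this
    omega
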